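/- Suppose the highest ℓ-weight ψ has all zeroes and poles in q^ℤ, i.e. ψ_i(z) = c_i·∏_{s∈ℤ}(1 − q^s/z)^{l_{i,s}} / ∏_{s∈ℤ}(1 − q^s/z)^{m_{i,s}} with c_i ∈ 𝕂* and l_{i,s}, m_{i,s} ∈ ℕ almost all zero, let 1/ψ^den denote the highest ℓ-weight (∏_{s∈ℤ}(1 − q^s/z)^{−m_{i,s}})_{i∈I}, set Δ_𝐥 := ∏_{i∈I}∏_{a=1}^{n_i}∏_{s∈ℤ}(1 − q^s/z_{ia})^{l_{i,s}} ∈ 𝒱_𝐧, and suppose every entry x_{ia} of 𝐱 is an integer power of q. Then for every F ∈ 𝒱_𝐧: F ∈ Θ(ψ)_𝐱 if and only if Δ_𝐥·F ∈ Θ(1/ψ^den)_𝐱. Consequently, multiplication by Δ_𝐥 induces a 𝕂-linear isomorphism 𝒱_𝐧/Θ(ψ)_𝐱 ≅ (Δ_𝐥·𝒱_𝐧) / ((Δ_𝐥·𝒱_𝐧) ∩ Θ(1/ψ^den)_𝐱). -/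

import Mathlib

open scoped BigOperators

/-! ### Iterated Laurent series -/

noncomputable def ILaux (K : Type) [Field K] : ℕ → Σ' (T : Type), Field T
  | 0 => ⟨K, inferInstance⟩
  | n+1 => ⟨@LaurentSeries (ILaux K n).1 (letI := (ILaux K n).2; inferInstance),
            letI := (ILaux K n).2; inferInstance⟩

noncomputable instance ILaux.instField (K : Type) [Field K] (n : ℕ) : Field (ILaux K n).1 :=
  (ILaux K n).2

/-- `IterLaurent K n` is the `n`-fold iterated Laurent series field
`K((t_n))((t_{n-1}))⋯((t_1))`, with `t_1` the innermost variable in the notation. -/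
noncomputable def IterLaurent (K : Type) [Field K] (n : ℕ) : Type := (ILaux K n).1

noncomputable instance IterLaurent.instField (K : Type) [Field K] (n : ℕ) :
    Field (IterLaurent K n) := (ILaux K n).2

/-- The variable `t_a` of the iterated Laurent series field. -/
noncomputable def tvar (K : Type) [Field K] : (n : ℕ) → Fin n → IterLaurent K n
  | n+1, ⟨0, _⟩ => (HahnSeries.single (1:ℤ) (1 : IterLaurent K n) : LaurentSeries (IterLaurent K n))
  | n+1, ⟨a+1, _h⟩ => (HahnSeries.C (tvar K n ⟨a, by omega⟩) : LaurentSeries (IterLaurent K n))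

/-- Iterated extraction of the coefficient of `t_1⁻¹ t_2⁻¹ ⋯ t_n⁻¹`. -/
noncomputable def ires (K : Type) [Field K] : (n : ℕ) → IterLaurent K n → K
  | 0, x => x
  | n+1, x => ires K n ((x : LaurentSeries (IterLaurent K n)).coeff (-1))

/-- Constants embed into the iterated Laurent series field. -/
noncomputable def constIL (K : Type) [Field K] : (n : ℕ) → (K →+* IterLaurent K n)
  | 0 => RingHom.id K
  | n+1 => ((HahnSeries.C : IterLaurent K n →+* LaurentSeries (IterLaurent K n)).comp (constIL K n))

/-! ### Laurent polynomials -/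

/-- The ring of Laurent polynomials over `K` in variables indexed by `ι`. -/
noncomputable abbrev LaurentPoly (K : Type) [CommRing K] (ι : Type) : Type :=
  AddMonoidAlgebra K (ι →₀ ℤ)

/-- Evaluation of a Laurent polynomial at (invertible) values `v` in a field `L`,
transporting coefficients along `φ`. -/
noncomputable def lpEval {K L ι : Type} [CommRing K] [Field L] (φ : K →+* L) (v : ι → L)
    (F : LaurentPoly K ι) : L :=
  F.coeff.sum fun d c => φ c * d.prod fun a k => v a ^ k

/-- Renaming of variables of a Laurent polynomial along a bijection. -/
noncomputable def lpRename {K : Type} [CommRing K] {ι κ : Type} (e : ι ≃ κ) :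
    LaurentPoly K ι ≃ₐ[K] LaurentPoly K κ :=
  AddMonoidAlgebra.domCongr K K (Finsupp.domCongr e)

/-- The variable `z_c` as a Laurent polynomial. -/
noncomputable def lpVar {K : Type} [CommRing K] {ι : Type} (c : ι) : LaurentPoly K ι :=
  AddMonoidAlgebra.single (Finsupp.single c 1) 1

noncomputable instance {K ι : Type} [Field K] : IsDomain (LaurentPoly K ι) :=
  NoZeroDivisors.to_isDomain _

/-! ### The ground field `𝕂 = ℚ(q)` -/

/-- The ground field `𝕂 = ℚ(q)`. -/
noncomputable abbrev QQq : Type := RatFunc ℚ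

/-- The variable `q ∈ 𝕂`. -/
noncomputable def qq : QQq := RatFunc.X

section SetupB

variable {I : Type} [Fintype I] [LinearOrder I] [DecidableEq I]

/-- The function `ζ_{ij}`, evaluated in a field `L` (at an invertible element `w`),
where `qL` is the image of `q` in `L` and `d` is the symmetrized Cartan matrix. -/
noncomputable def zetaVal (d : I → I → ℤ) {L : Type} [Field L] (qL : L) (i j : I) (w : L) : L :=
  if i < j then qL ^ (-(d i j)) - w
  else if i = j then (qL ^ (-(d i j)) - w) / (1 - w)
  else 1 - qL ^ (-(d i j)) * w⁻¹

variable (n : I → ℕ)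

/-- The space `𝒱_𝐧` of color-symmetric Laurent polynomials over a field `K`. -/
noncomputable def VSymF (K : Type) [Field K] :
    Submodule K (LaurentPoly K (Σ i : I, Fin (n i))) where
  carrier := {F | ∀ σ : Equiv.Perm (Σ i : I, Fin (n i)),
    (∀ c, (σ c).1 = c.1) → lpRename (K := K) σ F = F}
  add_mem' := by intro F G hF hG σ hσ; simp [map_add, hF σ hσ, hG σ hσ]
  zero_mem' := by intro σ hσ; simp
  smul_mem' := by intro c F hF σ hσ; simp [map_smul, hF σ hσ]

/-- The space `V_𝐱` of Laurent polynomials over a field `K`, symmetric under exchanging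
`z_{ia}` and `z_{ib}` whenever `x_{ia} = x_{ib}`. -/
noncomputable def VxSymF (K : Type) [Field K] (x : (Σ i : I, Fin (n i)) → QQqˣ) :
    Submodule K (LaurentPoly K (Σ i : I, Fin (n i))) where
  carrier := {F | ∀ σ : Equiv.Perm (Σ i : I, Fin (n i)),
    (∀ c, (σ c).1 = c.1 ∧ x (σ c) = x c) → lpRename (K := K) σ F = F}
  add_mem' := by intro F G hF hG σ hσ; simp [map_add, hF σ hσ, hG σ hσ]
  zero_mem' := by intro σ hσ; simp
  smul_mem' := by intro c F hF σ hσ; simp [map_smul, hF σ hσ]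

variable {n}

/-- The residue conditions defining `Θ(ψ)_𝐱 ⊆ 𝒱_𝐧`, where `psiv i w` is the evaluation of
`ψ_i(z)/z` at `z = w` (so that `psiv` encodes the highest ℓ-weight `ψ`). -/
noncomputable def ThetaPsiCond (d : I → I → ℤ) (x : (Σ i : I, Fin (n i)) → QQqˣ)
    (psiv : I → IterLaurent QQq (∑ i, n i) → IterLaurent QQq (∑ i, n i))
    (F : LaurentPoly QQq (Σ i : I, Fin (n i))) : Prop :=
  ∀ (e : Fin (∑ i, n i) ≃ (Σ i : I, Fin (n i))) (dd : Fin (∑ i, n i) → ℤ),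
    ires QQq (∑ i, n i) (
      (∏ a, (constIL QQq (∑ i, n i) ((x (e a) : QQq)) * (1 + tvar QQq (∑ i, n i) a)) ^ dd a) *
      lpEval (constIL QQq (∑ i, n i))
        (fun c => constIL QQq (∑ i, n i) ((x c : QQq)) * (1 + tvar QQq (∑ i, n i) (e.symm c))) F *
      (∏ a, psiv (e a).1
        (constIL QQq (∑ i, n i) ((x (e a) : QQq)) * (1 + tvar QQq (∑ i, n i) a))) *
      ∏ p ∈ Finset.filter (fun p : Fin (∑ i, n i) × Fin (∑ i, n i) => p.1 < p.2) Finset.univ,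
        (zetaVal d (constIL QQq (∑ i, n i) qq) (e p.2).1 (e p.1).1
          ((constIL QQq (∑ i, n i) ((x (e p.2) : QQq)) * (1 + tvar QQq (∑ i, n i) p.2)) /
           (constIL QQq (∑ i, n i) ((x (e p.1) : QQq)) * (1 + tvar QQq (∑ i, n i) p.1))))⁻¹) = 0

/-- The value of `ψ_i(z)/z` at `z = w`, for a highest ℓ-weight with data `c`, `l`, `m`
(zeroes of order `l_{i,γ}` and poles of order `m_{i,γ}` at `γ ∈ 𝕂*`). -/
noncomputable def psiOverZVal {L : Type} [Field L] (φ : QQq →+* L)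
    (c : I → QQqˣ) (l m : I → QQqˣ →₀ ℕ) (i : I) (w : L) : L :=
  φ (c i) * ((l i).prod fun γ k => (1 - φ (γ : QQq) / w) ^ (k : ℤ)) *
    ((m i).prod fun γ k => (1 - φ (γ : QQq) / w) ^ (-(k : ℤ))) / w

open Classical in
/-- The set `Θ_𝐱^{𝐦'} ⊆ V_𝐱` (over `ℚ`). -/
noncomputable def ThetaX (d : I → I → ℤ) (x : (Σ i : I, Fin (n i)) → QQqˣ)
    (m' : (Σ i : I, Fin (n i)) → ℤ) : Set (LaurentPoly ℚ (Σ i : I, Fin (n i))) :=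
  {F | F ∈ VxSymF n ℚ x ∧
    ∀ (e : Fin (∑ i, n i) ≃ (Σ i : I, Fin (n i))) (dd : Fin (∑ i, n i) → ℤ),
      ires ℚ (∑ i, n i) (
        (∏ a, (1 + tvar ℚ (∑ i, n i) a) ^ dd a) *
        lpEval (constIL ℚ (∑ i, n i)) (fun c => 1 + tvar ℚ (∑ i, n i) (e.symm c)) F *
        (∏ p ∈ Finset.filter (fun p : Fin (∑ i, n i) × Fin (∑ i, n i) => p.1 < p.2) Finset.univ,
          (tvar ℚ (∑ i, n i) p.2 - tvar ℚ (∑ i, n i) p.1) ^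
            (((if (e p.1).1 = (e p.2).1 ∧ x (e p.1) = x (e p.2) then 1 else 0) : ℤ) -
             ((if (x (e p.1) : QQq) = (x (e p.2) : QQq) * qq ^ d (e p.1).1 (e p.2).1
                then 1 else 0) : ℤ))) *
        ∏ a, tvar ℚ (∑ i, n i) a ^ (-(m' (e a)))) = 0}

/-- Extension of coefficients from `ℚ` to `𝕂` of a Laurent polynomial. -/
noncomputable def extQK {ι : Type} (F : LaurentPoly ℚ ι) : LaurentPoly QQq ι :=
  AddMonoidAlgebra.ofCoeff (Finsupp.mapRange (algebraMap ℚ QQq) (map_zero _) F.coeff)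

/-- Rescaling of variables `z_{ia} ↦ x_{ia}·z_{ia}` of a Laurent polynomial over `𝕂`. -/
noncomputable def rescale {ι : Type} (x : ι → QQqˣ) (F : LaurentPoly QQq ι) :
    LaurentPoly QQq ι :=
  AddMonoidAlgebra.ofCoeff (F.coeff.sum fun dd c => Finsupp.single dd (c * dd.prod fun a k => (x a : QQq) ^ k))

end SetupB

/-! ### ℓ-weights with zeroes and poles in `q^ℤ` -/

/-- `q` as a unit of `𝕂`. -/
noncomputable def qUnit : QQqˣ := Units.mk0 qq (by simpa [qq] using RatFunc.X_ne_zero)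

/-- Conversion of exponent data indexed by `s ∈ ℤ` to exponent data indexed by `γ = q^s ∈ 𝕂*`. -/
noncomputable def gammaOfZ (lz : ℤ →₀ ℕ) : QQqˣ →₀ ℕ :=
  Finsupp.mapDomain (fun s : ℤ => qUnit ^ s) lz

/-- The element `Δ_𝐥 = ∏_{i∈I}∏_{a=1}^{n_i}∏_{s∈ℤ} (1 − q^s/z_{ia})^{l_{i,s}} ∈ 𝒱_𝐧`. -/
noncomputable def deltaL {I : Type} [Fintype I] [DecidableEq I] {n : I → ℕ} (l : I → ℤ →₀ ℕ) :
    LaurentPoly QQq (Σ i : I, Fin (n i)) :=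
  ∏ cc : (Σ i : I, Fin (n i)), (l cc.1).prod fun s k =>
    ((1 : LaurentPoly QQq (Σ i : I, Fin (n i))) -
      AddMonoidAlgebra.single (Finsupp.single cc (-1 : ℤ)) (qq ^ s)) ^ k


/-!
The zeroes of `ψ` all lie at points `q^s`, so the numerator `∏_s (1 - q^s/z)^{l_{i,s}}` of
`ψ_i(z_a)`, taken over all variables, is the evaluation of the Laurent polynomial `Δ_𝐥` at
`z_a = x_a(1 + t_a)`. Evaluation is a ring homomorphism, so for every listing and every monomial
the integrand defining `Θ(ψ)_𝐱` at `F` is the constant `∏ c_i` times the integrand defining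
`Θ(1/ψ^den)_𝐱` at `Δ_𝐥·F`; the iterated residue is `𝕂`-linear, so one vanishes iff the other
does. Since `Δ_𝐥` is a nonzero color-symmetric element of a domain, `F` is color-symmetric iff
`Δ_𝐥·F` is. The isomorphism is induced by `F ↦ Δ_𝐥·F` onto `Δ_𝐥·𝒱_𝐧` followed by the quotient
map, whose kernel is `Θ(ψ)_𝐱`.
-/

namespace IterLaurent

noncomputable def succEquiv (K : Type) [Field K] (n : ℕ) :
    IterLaurent K (n + 1) ≃+* LaurentSeries (IterLaurent K n) :=
  RingEquiv.refl _

variable {K : Type} [Field K]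

lemma ires_succ {n : ℕ} (x : IterLaurent K (n + 1)) :
    ires K (n + 1) x = ires K n ((succEquiv K n x).coeff (-1)) := rfl

lemma succEquiv_constIL {n : ℕ} (k : K) :
    succEquiv K n (constIL K (n + 1) k) = HahnSeries.C (constIL K n k) := rfl

lemma succEquiv_tvar_zero {n : ℕ} (h : 0 < n + 1) :
    succEquiv K n (tvar K (n + 1) ⟨0, h⟩) = HahnSeries.single 1 1 := rfl

lemma succEquiv_tvar_succ {n a : ℕ} (h : a + 1 < n + 1) :
    succEquiv K n (tvar K (n + 1) ⟨a + 1, h⟩) = HahnSeries.C (tvar K n ⟨a, by omega⟩) := rfl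

lemma ires_add : ∀ (n : ℕ) (x y : IterLaurent K n), ires K n (x + y) = ires K n x + ires K n y
  | 0, _, _ => rfl
  | n + 1, x, y => by
    rw [ires_succ, ires_succ, ires_succ, map_add, HahnSeries.coeff_add, ires_add n]

lemma ires_constIL_mul : ∀ (n : ℕ) (k : K) (x : IterLaurent K n),
    ires K n (constIL K n k * x) = k * ires K n x
  | 0, _, _ => rfl
  | n + 1, k, x => by
    rw [ires_succ, ires_succ, map_mul, succEquiv_constIL, HahnSeries.C_mul_eq_smul,
      HahnSeries.coeff_smul, smul_eq_mul, ires_constIL_mul n]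

lemma ires_zero (n : ℕ) : ires K n 0 = 0 := by
  simpa using ires_constIL_mul (K := K) n 0 0

lemma one_add_tvar_ne_zero : ∀ (n : ℕ) (a : Fin n), (1 + tvar K n a : IterLaurent K n) ≠ 0
  | n + 1, ⟨0, h⟩ => fun h0 => by
    have := congrArg (succEquiv K n) h0
    rw [map_add, map_one, map_zero, succEquiv_tvar_zero h] at this
    simpa using congrArg (HahnSeries.coeff · 0) this
  | n + 1, ⟨a + 1, h⟩ => fun h0 => by
    have := congrArg (succEquiv K n) h0
    rw [map_add, map_one, map_zero, succEquiv_tvar_succ h, ← map_one HahnSeries.C,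
      ← map_add, map_eq_zero_iff _ HahnSeries.C_injective] at this
    exact one_add_tvar_ne_zero n ⟨a, by omega⟩ this

lemma constIL_mul_one_add_tvar_ne_zero {n : ℕ} {k : K} (hk : k ≠ 0) (a : Fin n) :
    constIL K n k * (1 + tvar K n a) ≠ 0 :=
  mul_ne_zero ((map_ne_zero _).mpr hk) (one_add_tvar_ne_zero n a)

end IterLaurent

section LaurentPolyEval

variable {K L ι : Type} [CommRing K] [Field L] (φ : K →+* L) (v : ι → L)

lemma lpEval_single (d : ι →₀ ℤ) (k : K) :
    lpEval φ v (AddMonoidAlgebra.single d k) = φ k * d.prod fun a e => v a ^ e := by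
  rw [lpEval, AddMonoidAlgebra.coeff_single]
  exact Finsupp.sum_single_index (by simp)

lemma lpEval_add (F G : LaurentPoly K ι) : lpEval φ v (F + G) = lpEval φ v F + lpEval φ v G :=
  Finsupp.sum_add_index' (by simp) fun _ _ _ => by rw [map_add, add_mul]

lemma lpEval_zero : lpEval φ v (0 : LaurentPoly K ι) = 0 :=
  Finsupp.sum_zero_index

lemma lpEval_smul (k : K) (F : LaurentPoly K ι) : lpEval φ v (k • F) = φ k * lpEval φ v F := by
  rw [lpEval, AddMonoidAlgebra.coeff_smul, Finsupp.sum_smul_index (by simp), lpEval,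
    Finsupp.mul_sum]
  simp only [map_mul, mul_assoc]

noncomputable def lpEvalRingHom (hv : ∀ a, v a ≠ 0) : LaurentPoly K ι →+* L :=
  AddMonoidAlgebra.liftNCRingHom φ
    { toFun := fun d => (Multiplicative.toAdd d).prod fun a e => v a ^ e
      map_one' := Finsupp.prod_zero_index
      map_mul' := fun _ _ => Finsupp.prod_add_index' (fun a => zpow_zero (v a))
        fun a => zpow_add₀ (hv a) }
    fun _ _ => Commute.all _ _

lemma lpEval_eq_lpEvalRingHom (hv : ∀ a, v a ≠ 0) (F : LaurentPoly K ι) :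
    lpEval φ v F = lpEvalRingHom φ v hv F := by
  induction F using AddMonoidAlgebra.induction_linear with
  | zero => rw [lpEval_zero, map_zero]
  | add F G hF hG => rw [lpEval_add, map_add, hF, hG]
  | single d k => rw [lpEval_single, lpEvalRingHom, AddMonoidAlgebra.liftNCRingHom_single]; rfl

lemma lpEval_mul (hv : ∀ a, v a ≠ 0) (F G : LaurentPoly K ι) :
    lpEval φ v (F * G) = lpEval φ v F * lpEval φ v G := by
  simp only [lpEval_eq_lpEvalRingHom φ v hv, map_mul]

end LaurentPolyEval

section Symmetric

variable {I : Type} {n : I → ℕ} {K : Type} [Field K]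

lemma lpRename_single {ι κ : Type} (e : ι ≃ κ) (d : ι →₀ ℤ) (k : K) :
    lpRename e (AddMonoidAlgebra.single d k) =
      AddMonoidAlgebra.single (Finsupp.equivMapDomain e d) k := by
  simp [lpRename, AddMonoidAlgebra.domCongr_single]

lemma mul_mem_VSymF_iff {G F : LaurentPoly K (Σ i : I, Fin (n i))} (hG : G ∈ VSymF n K)
    (hG0 : G ≠ 0) : G * F ∈ VSymF n K ↔ F ∈ VSymF n K := by
  refine forall₂_congr fun σ hσ => ?_
  rw [map_mul, hG σ hσ, mul_right_inj' hG0]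

end Symmetric

section DeltaL

variable {I : Type} [Fintype I] [DecidableEq I] {n : I → ℕ}

lemma deltaL_mem_VSymF (l : I → ℤ →₀ ℕ) : deltaL (n := n) l ∈ VSymF n QQq := by
  intro σ hσ
  rw [deltaL, map_prod]
  refine Fintype.prod_equiv σ _ _ fun cc => ?_
  rw [map_finsuppProd, hσ cc]
  refine Finsupp.prod_congr fun s k => ?_
  rw [map_pow, map_sub, map_one, lpRename_single, Finsupp.equivMapDomain_single]

lemma one_sub_single_ne_zero {K ι : Type} [Field K] {d : ι →₀ ℤ} (hd : d ≠ 0) (k : K) :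
    (1 - AddMonoidAlgebra.single d k : LaurentPoly K ι) ≠ 0 := by
  rw [sub_ne_zero, AddMonoidAlgebra.one_def]
  intro h
  rcases AddMonoidAlgebra.single_inj.mp h with ⟨h0, -⟩ | ⟨h1, -⟩
  · exact hd h0.symm
  · exact one_ne_zero h1

lemma deltaL_ne_zero (l : I → ℤ →₀ ℕ) : deltaL (n := n) l ≠ 0 :=
  Finset.prod_ne_zero_iff.mpr fun cc _ => Finset.prod_ne_zero_iff.mpr fun _ _ =>
    pow_ne_zero _ (one_sub_single_ne_zero (by simp) _)

lemma lpEval_deltaL {L : Type} [Field L] (φ : QQq →+* L) (v : (Σ i : I, Fin (n i)) → L)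
    (hv : ∀ cc, v cc ≠ 0) (l : I → ℤ →₀ ℕ) :
    lpEval φ v (deltaL l) =
      ∏ cc : Σ i : I, Fin (n i), (l cc.1).prod fun s k => (1 - φ qq ^ s / v cc) ^ k := by
  rw [deltaL, lpEval_eq_lpEvalRingHom φ v hv, map_prod]
  refine Finset.prod_congr rfl fun cc _ => ?_
  rw [map_finsuppProd]
  refine Finsupp.prod_congr fun s k => ?_
  rw [map_pow, map_sub, map_one, ← lpEval_eq_lpEvalRingHom φ v hv, lpEval_single,
    Finsupp.prod_single_index (zpow_zero _), zpow_neg_one, map_zpow₀, div_eq_mul_inv]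

end DeltaL

section PsiFactorization

lemma prod_gammaOfZ {L : Type} [Field L] (φ : QQq →+* L) (lz : ℤ →₀ ℕ) (w : L) :
    ((gammaOfZ lz).prod fun γ k => (1 - φ (γ : QQq) / w) ^ (k : ℤ)) =
      lz.prod fun s k => (1 - φ qq ^ s / w) ^ k := by
  classical
  rw [gammaOfZ, Finsupp.prod_mapDomain_index (fun _ => by simp)
    fun _ _ _ => by rw [zpow_natCast, zpow_natCast, zpow_natCast, pow_add]]
  refine Finsupp.prod_congr fun s _ => ?_
  rw [Units.val_zpow_eq_zpow_val, show (qUnit : QQq) = qq from rfl, map_zpow₀, zpow_natCast]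

lemma psiOverZVal_gammaOfZ {I L : Type} [Field L] (φ : QQq →+* L)
    (c : I → QQqˣ) (l m : I → ℤ →₀ ℕ) (i : I) (w : L) :
    psiOverZVal φ c (fun i => gammaOfZ (l i)) (fun i => gammaOfZ (m i)) i w =
      φ (c i) * ((l i).prod fun s k => (1 - φ qq ^ s / w) ^ k) *
        psiOverZVal φ (fun _ => 1) (fun _ => 0) (fun i => gammaOfZ (m i)) i w := by
  simp only [psiOverZVal, prod_gammaOfZ, Units.val_one, map_one, Finsupp.prod_zero_index]
  ring

variable {I : Type} [Fintype I] [DecidableEq I] {n : I → ℕ}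

lemma prod_psiOverZVal_gammaOfZ {L : Type} [Field L] (φ : QQq →+* L)
    (c : I → QQqˣ) (l m : I → ℤ →₀ ℕ) (v : (Σ i : I, Fin (n i)) → L) (hv : ∀ cc, v cc ≠ 0) :
    ∏ cc, psiOverZVal φ c (fun i => gammaOfZ (l i)) (fun i => gammaOfZ (m i)) cc.1 (v cc) =
      φ (∏ cc : Σ i : I, Fin (n i), (c cc.1 : QQq)) * lpEval φ v (deltaL l) *
        ∏ cc, psiOverZVal φ (fun _ => 1) (fun _ => 0) (fun i => gammaOfZ (m i)) cc.1 (v cc) := by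
  simp only [psiOverZVal_gammaOfZ, Finset.prod_mul_distrib, map_prod, lpEval_deltaL φ v hv]

end PsiFactorization

section Theta

open IterLaurent

variable {I : Type} [Fintype I] [LinearOrder I] {n : I → ℕ}

noncomputable def thetaSubmodule (d : I → I → ℤ) (x : (Σ i : I, Fin (n i)) → QQqˣ)
    (psiv : I → IterLaurent QQq (∑ i, n i) → IterLaurent QQq (∑ i, n i)) :
    Submodule QQq (LaurentPoly QQq (Σ i : I, Fin (n i))) where
  carrier := {F | F ∈ VSymF n QQq ∧ ThetaPsiCond d x psiv F}
  add_mem' := by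
    rintro F G ⟨hF, hFθ⟩ ⟨hG, hGθ⟩
    refine ⟨add_mem hF hG, fun e dd => ?_⟩
    rw [lpEval_add, mul_add, add_mul, add_mul, ires_add, hFθ e dd, hGθ e dd, add_zero]
  zero_mem' := ⟨zero_mem _, fun e dd => by
    rw [lpEval_zero, mul_zero, zero_mul, zero_mul, ires_zero]⟩
  smul_mem' := by
    rintro k F ⟨hF, hFθ⟩
    refine ⟨Submodule.smul_mem _ k hF, fun e dd => ?_⟩
    rw [lpEval_smul, mul_left_comm, mul_assoc, mul_assoc, ires_constIL_mul, ← mul_assoc,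
      hFθ e dd, mul_zero]

lemma thetaPsiCond_iff_deltaL_mul (d : I → I → ℤ) (x : (Σ i : I, Fin (n i)) → QQqˣ)
    (c : I → QQqˣ) (l m : I → ℤ →₀ ℕ) (F : LaurentPoly QQq (Σ i : I, Fin (n i))) :
    ThetaPsiCond d x (psiOverZVal (constIL QQq (∑ i, n i)) c (fun i => gammaOfZ (l i))
        (fun i => gammaOfZ (m i))) F ↔
      ThetaPsiCond d x (psiOverZVal (constIL QQq (∑ i, n i)) (fun _ => 1) (fun _ => 0)
        (fun i => gammaOfZ (m i))) (deltaL l * F) := by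
  refine forall₂_congr fun e dd => ?_
  have hv (cc : Σ i : I, Fin (n i)) :=
    constIL_mul_one_add_tvar_ne_zero (x cc).ne_zero (e.symm cc)
  have hc : (∏ cc : Σ i : I, Fin (n i), (c cc.1 : QQq)) ≠ 0 :=
    Finset.prod_ne_zero_iff.mpr fun cc _ => (c cc.1).ne_zero
  have hψ := prod_psiOverZVal_gammaOfZ (constIL QQq (∑ i, n i)) c l m _ hv
  simp only [← e.prod_comp, e.symm_apply_apply] at hψ hc
  rw [hψ, lpEval_mul _ _ hv,
    show ∀ A f k δ P Z : IterLaurent QQq (∑ i, n i),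
      A * f * (k * δ * P) * Z = k * (A * (δ * f) * P * Z) from fun _ _ _ _ _ _ => by ring,
    ires_constIL_mul, mul_eq_zero, or_iff_right hc]

end Theta

namespace Submodule

variable {R M M' : Type} [CommRing R] [AddCommGroup M] [Module R M] [AddCommGroup M']
  [Module R M']

noncomputable def quotEquivMapOfMemIff (μ : M →ₗ[R] M') (W Θ₁ : Submodule R M)
    (Θ₂ : Submodule R M') (h : ∀ F ∈ W, F ∈ Θ₁ ↔ μ F ∈ Θ₂) :
    (W ⧸ Θ₁.comap W.subtype) ≃ₗ[R] (W.map μ ⧸ Θ₂.comap (W.map μ).subtype) :=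
  let g := (Θ₂.comap (W.map μ).subtype).mkQ ∘ₗ μ.submoduleMap W
  have hker : Θ₁.comap W.subtype = LinearMap.ker g := by
    ext F
    simpa [g, Quotient.mk_eq_zero] using h F F.2
  (quotEquivOfEq _ _ hker).trans
    (g.quotKerEquivOfSurjective ((mkQ_surjective _).comp (μ.submoduleMap_surjective W)))

lemma quotEquivMapOfMemIff_mk (μ : M →ₗ[R] M') (W Θ₁ : Submodule R M)
    (Θ₂ : Submodule R M') (h : ∀ F ∈ W, F ∈ Θ₁ ↔ μ F ∈ Θ₂) (F : W) :
    quotEquivMapOfMemIff μ W Θ₁ Θ₂ h (Quotient.mk F) = Quotient.mk ⟨μ F, mem_map_of_mem F.2⟩ :=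
  rfl

end Submodule

theorem statement9_general {I : Type} [Fintype I] [LinearOrder I]
    (d : I → I → ℤ)
    (n : I → ℕ)
    (c : I → QQqˣ) (l m : I → ℤ →₀ ℕ)
    (x : (Σ i : I, Fin (n i)) → QQqˣ) :
    (∀ F : LaurentPoly QQq (Σ i : I, Fin (n i)),
      (F ∈ {F | F ∈ VSymF n QQq ∧ ThetaPsiCond d x
          (psiOverZVal (constIL QQq (∑ i, n i)) c (fun i => gammaOfZ (l i))
            (fun i => gammaOfZ (m i))) F} ↔
        deltaL l * F ∈ {F | F ∈ VSymF n QQq ∧ ThetaPsiCond d x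
          (psiOverZVal (constIL QQq (∑ i, n i)) (fun _ => 1) (fun _ => 0)
            (fun i => gammaOfZ (m i))) F})) ∧
    ∃ Θ1 Θ2 : Submodule QQq (LaurentPoly QQq (Σ i : I, Fin (n i))),
      (Θ1 : Set (LaurentPoly QQq (Σ i : I, Fin (n i)))) =
        {F | F ∈ VSymF n QQq ∧ ThetaPsiCond d x
          (psiOverZVal (constIL QQq (∑ i, n i)) c (fun i => gammaOfZ (l i))
            (fun i => gammaOfZ (m i))) F} ∧
      (Θ2 : Set (LaurentPoly QQq (Σ i : I, Fin (n i)))) =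
        {F | F ∈ VSymF n QQq ∧ ThetaPsiCond d x
          (psiOverZVal (constIL QQq (∑ i, n i)) (fun _ => 1) (fun _ => 0)
            (fun i => gammaOfZ (m i))) F} ∧
      ∃ iso : (VSymF n QQq ⧸ Θ1.comap (VSymF n QQq).subtype) ≃ₗ[QQq]
          ((Submodule.map (LinearMap.mulLeft QQq (deltaL l)) (VSymF n QQq)) ⧸
            Θ2.comap (Submodule.map (LinearMap.mulLeft QQq (deltaL l)) (VSymF n QQq)).subtype),
        ∀ F : VSymF n QQq,
          iso (Submodule.Quotient.mk F) =
            Submodule.Quotient.mk ⟨deltaL l * (F : LaurentPoly QQq (Σ i : I, Fin (n i))),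
              Submodule.mem_map_of_mem F.2⟩ := by
  have mem_iff (F : LaurentPoly QQq (Σ i : I, Fin (n i))) :=
    and_congr (mul_mem_VSymF_iff (F := F) (deltaL_mem_VSymF l) (deltaL_ne_zero l)).symm
      (thetaPsiCond_iff_deltaL_mul d x c l m F)
  exact ⟨mem_iff, _, _, rfl, rfl, Submodule.quotEquivMapOfMemIff _ _ _ _ fun F _ => mem_iff F,
    Submodule.quotEquivMapOfMemIff_mk _ _ (thetaSubmodule _ _ _) (thetaSubmodule _ _ _) _⟩

/-- Suppose `ψ` has all zeroes and poles in `q^ℤ` and all entries of `𝐱` are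
integer powers of `q`. Then `F ∈ Θ(ψ)_𝐱 ⟺ Δ_𝐥·F ∈ Θ(1/ψ^den)_𝐱`, and multiplication by
`Δ_𝐥` induces a `𝕂`-linear isomorphism
`𝒱_𝐧/Θ(ψ)_𝐱 ≅ (Δ_𝐥·𝒱_𝐧)/((Δ_𝐥·𝒱_𝐧) ∩ Θ(1/ψ^den)_𝐱)`. -/
theorem statement9 {I : Type} [Fintype I] [LinearOrder I]
    (d : I → I → ℤ)
    (hdsym : ∀ i j, d i j = d j i) (hdpos : ∀ i, 0 < d i i) (hdeven : ∀ i, Even (d i i))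
    (hdneg : ∀ i j, i ≠ j → d i j ≤ 0) (hdint : ∀ i j, d i i ∣ 2 * d i j)
    (n : I → ℕ)
    (c : I → QQqˣ) (l m : I → ℤ →₀ ℕ)
    (x : (Σ i : I, Fin (n i)) → QQqˣ)
    (hx : ∀ cc : Σ i : I, Fin (n i), ∃ s : ℤ, (x cc : QQq) = qq ^ s) :
    (∀ F : LaurentPoly QQq (Σ i : I, Fin (n i)),
      (F ∈ {F | F ∈ VSymF n QQq ∧ ThetaPsiCond d x
          (psiOverZVal (constIL QQq (∑ i, n i)) c (fun i => gammaOfZ (l i))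
            (fun i => gammaOfZ (m i))) F} ↔
        deltaL l * F ∈ {F | F ∈ VSymF n QQq ∧ ThetaPsiCond d x
          (psiOverZVal (constIL QQq (∑ i, n i)) (fun _ => 1) (fun _ => 0)
            (fun i => gammaOfZ (m i))) F})) ∧
    ∃ Θ1 Θ2 : Submodule QQq (LaurentPoly QQq (Σ i : I, Fin (n i))),
      (Θ1 : Set (LaurentPoly QQq (Σ i : I, Fin (n i)))) =
        {F | F ∈ VSymF n QQq ∧ ThetaPsiCond d x
          (psiOverZVal (constIL QQq (∑ i, n i)) c (fun i => gammaOfZ (l i))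
            (fun i => gammaOfZ (m i))) F} ∧
      (Θ2 : Set (LaurentPoly QQq (Σ i : I, Fin (n i)))) =
        {F | F ∈ VSymF n QQq ∧ ThetaPsiCond d x
          (psiOverZVal (constIL QQq (∑ i, n i)) (fun _ => 1) (fun _ => 0)
            (fun i => gammaOfZ (m i))) F} ∧
      ∃ iso : (VSymF n QQq ⧸ Θ1.comap (VSymF n QQq).subtype) ≃ₗ[QQq]
          ((Submodule.map (LinearMap.mulLeft QQq (deltaL l)) (VSymF n QQq)) ⧸
            Θ2.comap (Submodule.map (LinearMap.mulLeft QQq (deltaL l)) (VSymF n QQq)).subtype),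
        ∀ F : VSymF n QQq,
          iso (Submodule.Quotient.mk F) =
            Submodule.Quotient.mk ⟨deltaL l * (F : LaurentPoly QQq (Σ i : I, Fin (n i))),
              Submodule.mem_map_of_mem F.2⟩ :=
  statement9_general d n c l m x
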